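/- arXiv:1310.6152 — 3 statements merged into one kernel-verified Lean document; each statement's English description precedes it below -/
import Mathlib

section
/- Let G be a connected graph and uv a cut-edge of G that is not a pendant edge (i.e., both u and v have degree at least 2). Let G' be the graph obtained from G by contracting the edge uv to a single vertex u and then attaching a new pendant vertex v to u. Then ϱ(G) > ϱ(G'), where ϱ denotes the distance spectral radius. -/
open SimpleGraph

/-- The distance matrix of a graph: the (i,j)-entry is the graph distance between i and j. -/
noncomputable def distMatrix {V : Type*} [Fintype V] (G : SimpleGraph V) : Matrix V V ℝ :=
  fun i j => (G.dist i j : ℝ)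

/-- The distance spectral radius: the largest eigenvalue of the distance matrix. -/
noncomputable def distSpectralRadius {V : Type*} [Fintype V] (G : SimpleGraph V) : ℝ :=
  sSup {μ : ℝ | ∃ X : V → ℝ, X ≠ 0 ∧ (distMatrix G).mulVec X = μ • X}

/-- The distance Perron vector: the positive unit eigenvector of the distance matrix
corresponding to the distance spectral radius. -/
def IsDistPerronVector {V : Type*} [Fintype V] (G : SimpleGraph V) (X : V → ℝ) : Prop :=
  (∀ v, 0 < X v) ∧ (∑ v, (X v) ^ 2 = 1) ∧
    (distMatrix G).mulVec X = distSpectralRadius G • X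

/-- The graph `G' = G_{uv} + uv`: contract the cut-edge `uv` of `G` to the vertex `u`
(neighbors of `v` become neighbors of `u`) and attach `v` back as a pendant vertex at `u`. -/
def contractPlusPendant {V : Type*} (G : SimpleGraph V) (u v : V) : SimpleGraph V :=
  SimpleGraph.fromRel (fun a b =>
    (a ≠ v ∧ b ≠ v ∧ (G.Adj a b ∨ (a = u ∧ G.Adj v b) ∨ (b = u ∧ G.Adj a v))) ∨
      (a = u ∧ b = v))

/-!
Let `A = bridgeSide G u v` be the side of `u` once the bridge `uv` is deleted, and `B₀` the other
side without `v`. In `G` a path from `A` to `B₀` runs through `u`, the bridge and `v`; in `G'` it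
runs through `u` only, while paths to the pendant vertex `v` get one edge longer. Hence
`D(G) - D(G')` is `1` on `A × B₀`, `-1` on `{v} × B₀` (and symmetrically) and `0` elsewhere, i.e.
`D(G) = D(G') + β αᵀ + α βᵀ` with `α = 𝟙_A - e_v` (`uSideVec`) and `β = 𝟙_{B₀}` (`vSideVec`).
For the Perron vector `Y` of `G'` the Rayleigh quotient gives
`ρ(G) ≥ Yᵀ D(G) Y = ρ(G') + 2 (αᵀY) (βᵀY)`. Here `βᵀY > 0` because `v` has a neighbour in `B₀`,
and `αᵀY > 0` because `u` has a neighbour `a ∈ A` and the eigenvalue equations of `G'` at the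
pendant vertex `v` force `Y v < Y u + Y a`.

The positive Perron vector exists because the distance matrix is symmetric with positive
off-diagonal entries: if `X` maximises the Rayleigh quotient then so does `|X|`, which is therefore
an eigenvector, and the eigenvalue equation forbids zero entries.
-/

open scoped RealInnerProductSpace

namespace Matrix

variable {n : Type*} [Fintype n] {A : Matrix n n ℝ}

theorem dotProduct_self_pos {X : n → ℝ} (hX : X ≠ 0) : 0 < X ⬝ᵥ X := by
  simpa using dotProduct_self_star_pos_iff.mpr hX

theorem dotProduct_mulVec_le_abs (hA : ∀ i j, 0 ≤ A i j) (X : n → ℝ) :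
    X ⬝ᵥ A *ᵥ X ≤ |X| ⬝ᵥ A *ᵥ |X| := by
  simp only [dotProduct, mulVec, Finset.mul_sum, Pi.abs_apply]
  refine Finset.sum_le_sum fun i _ => Finset.sum_le_sum fun j _ => ?_
  calc X i * (A i j * X j) ≤ |X i * (A i j * X j)| := le_abs_self _
    _ = |X i| * (A i j * |X j|) := by rw [abs_mul, abs_mul, abs_of_nonneg (hA i j)]

theorem pos_of_mulVec_eq_smul (hA : Pairwise fun i j => 0 < A i j) {μ : ℝ} {X : n → ℝ}
    (hX : 0 ≤ X) (hX0 : X ≠ 0) (h : A *ᵥ X = μ • X) (i : n) : 0 < X i := by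
  refine (hX i).lt_of_ne fun hi => hX0 (funext fun j => ?_)
  have hrow : ∑ k, A i k * X k = 0 := by
    simpa [mulVec, dotProduct, ← hi] using congrFun h i
  rcases eq_or_ne j i with rfl | hji
  · exact hi.symm
  have hterm := (Finset.sum_eq_zero_iff_of_nonneg fun k _ => ?_).mp hrow j (Finset.mem_univ j)
  · exact (mul_eq_zero.mp hterm).resolve_left (hA hji.symm).ne'
  · rcases eq_or_ne k i with rfl | hki
    · simp [← hi]
    · exact mul_nonneg (hA hki.symm).le (hX k)

variable [DecidableEq n]

noncomputable def rayleighSup (A : Matrix n n ℝ) : ℝ :=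
  ⨆ x : {x : EuclideanSpace ℝ n // x ≠ 0},
    RCLike.re ⟪toEuclideanLin A x, x⟫ / ‖(x : EuclideanSpace ℝ n)‖ ^ 2

theorem inner_toEuclideanLin_toLp (X : n → ℝ) :
    ⟪toEuclideanLin A (WithLp.toLp 2 X), WithLp.toLp 2 X⟫ = X ⬝ᵥ A *ᵥ X := by
  simp [EuclideanSpace.inner_eq_star_dotProduct, toLpLin_apply]

theorem dotProduct_mulVec_le_rayleighSup_mul (A : Matrix n n ℝ) (X : n → ℝ) :
    X ⬝ᵥ A *ᵥ X ≤ A.rayleighSup * (X ⬝ᵥ X) := by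
  rcases eq_or_ne X 0 with rfl | hX
  · simp
  have hbdd : BddAbove (Set.range fun x : {x : EuclideanSpace ℝ n // x ≠ 0} =>
      RCLike.re ⟪toEuclideanLin A x, x⟫ / ‖(x : EuclideanSpace ℝ n)‖ ^ 2) :=
    ⟨_, Set.forall_mem_range.mpr fun x => (le_abs_self _).trans
      ((LinearMap.toContinuousLinearMap (toEuclideanLin A)).rayleighQuotient_le_norm x)⟩
  have hx : (WithLp.toLp 2 X : EuclideanSpace ℝ n) ≠ 0 := by simpa using hX
  have hnorm : ‖(WithLp.toLp 2 X : EuclideanSpace ℝ n)‖ ^ 2 = X ⬝ᵥ X := by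
    rw [← real_inner_self_eq_norm_sq, EuclideanSpace.inner_eq_star_dotProduct]
    simp
  have := le_ciSup hbdd ⟨_, hx⟩
  dsimp only at this
  rwa [RCLike.re_to_real, inner_toEuclideanLin_toLp, hnorm,
    div_le_iff₀ (dotProduct_self_pos hX)] at this

theorem IsHermitian.exists_mulVec_eq_rayleighSup_smul [Nonempty n] (hA : A.IsHermitian) :
    ∃ X : n → ℝ, X ≠ 0 ∧ A *ᵥ X = A.rayleighSup • X := by
  obtain ⟨x, hx⟩ := (isSymmetric_toEuclideanLin_iff.mpr hA)
    |>.hasEigenvalue_iSup_of_finiteDimensional.exists_hasEigenvector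
  exact ⟨x.ofLp, by simpa using hx.2, congrArg WithLp.ofLp hx.apply_eq_smul⟩

theorem IsHermitian.sSup_eigenvalues_eq_rayleighSup [Nonempty n] (hA : A.IsHermitian) :
    sSup {μ : ℝ | ∃ X : n → ℝ, X ≠ 0 ∧ A *ᵥ X = μ • X} = A.rayleighSup := by
  refine IsGreatest.csSup_eq ⟨hA.exists_mulVec_eq_rayleighSup_smul, ?_⟩
  rintro μ ⟨X, hX, hμ⟩
  have := A.dotProduct_mulVec_le_rayleighSup_mul X
  rw [hμ, dotProduct_smul, smul_eq_mul] at this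
  exact le_of_mul_le_mul_right this (dotProduct_self_pos hX)

theorem dotProduct_smul_one_sub_mulVec (r : ℝ) (X : n → ℝ) :
    X ⬝ᵥ (r • (1 : Matrix n n ℝ) - A) *ᵥ X = r * (X ⬝ᵥ X) - X ⬝ᵥ A *ᵥ X := by
  rw [sub_mulVec, smul_mulVec, one_mulVec, dotProduct_sub, dotProduct_smul, smul_eq_mul]

theorem IsHermitian.posSemidef_rayleighSup_smul_one_sub (hA : A.IsHermitian) :
    (A.rayleighSup • (1 : Matrix n n ℝ) - A).PosSemidef := by
  refine .of_dotProduct_mulVec_nonneg (by simpa [IsHermitian] using hA.eq) fun X => ?_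
  rw [star_trivial, dotProduct_smul_one_sub_mulVec, sub_nonneg]
  exact A.dotProduct_mulVec_le_rayleighSup_mul X

theorem IsHermitian.exists_pos_mulVec_eq_rayleighSup_smul [Nonempty n] (hA : A.IsHermitian)
    (h0 : ∀ i j, 0 ≤ A i j) (hpos : Pairwise fun i j => 0 < A i j) :
    ∃ X : n → ℝ, (∀ i, 0 < X i) ∧ A *ᵥ X = A.rayleighSup • X := by
  obtain ⟨X, hX0, hX⟩ := hA.exists_mulVec_eq_rayleighSup_smul
  have hB := hA.posSemidef_rayleighSup_smul_one_sub
  -- `|X|` has at least the Rayleigh quotient of `X`, so it is also a maximiser, i.e. it lies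
  -- in the kernel of the positive semidefinite matrix `ρ • 1 - A`.
  have hquad : |X| ⬝ᵥ (A.rayleighSup • 1 - A) *ᵥ |X| = 0 := by
    refine le_antisymm ?_ (by simpa using hB.dotProduct_mulVec_nonneg |X|)
    have habs : |X| ⬝ᵥ |X| = X ⬝ᵥ X := by simp [dotProduct]
    have := dotProduct_mulVec_le_abs h0 X
    rw [hX, dotProduct_smul, smul_eq_mul] at this
    rw [dotProduct_smul_one_sub_mulVec, habs]
    linarith
  have heig : A *ᵥ |X| = A.rayleighSup • |X| := by
    have := (hB.dotProduct_mulVec_zero_iff |X|).mp (by simpa using hquad)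
    rwa [sub_mulVec, smul_mulVec, one_mulVec, sub_eq_zero, eq_comm] at this
  exact ⟨|X|, pos_of_mulVec_eq_smul hpos (abs_nonneg X) (by simpa using hX0) heig, heig⟩

end Matrix

namespace SimpleGraph

variable {V W : Type*} {G : SimpleGraph V} {K : SimpleGraph W}

theorem Walk.exists_length_le_of_adj_eq_or_adj {f : V → W}
    (hf : ∀ ⦃a b⦄, G.Adj a b → f a = f b ∨ K.Adj (f a) (f b)) {x y : V} (p : G.Walk x y) :
    ∃ q : K.Walk (f x) (f y), q.length ≤ p.length := by
  induction p with
  | nil => exact ⟨.nil, le_rfl⟩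
  | @cons a b _ hab _ ih =>
    obtain ⟨q, hq⟩ := ih
    rcases hf hab with heq | hadj
    · exact ⟨heq ▸ q, by grind [Walk.length_cons]⟩
    · exact ⟨.cons hadj q, by simpa using hq⟩

theorem Reachable.map_of_adj_eq_or_adj {f : V → W}
    (hf : ∀ ⦃a b⦄, G.Adj a b → f a = f b ∨ K.Adj (f a) (f b)) {x y : V} (h : G.Reachable x y) :
    K.Reachable (f x) (f y) :=
  let ⟨p⟩ := h
  ⟨(p.exists_length_le_of_adj_eq_or_adj hf).choose⟩

theorem Reachable.dist_map_le_of_adj_eq_or_adj {f : V → W}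
    (hf : ∀ ⦃a b⦄, G.Adj a b → f a = f b ∨ K.Adj (f a) (f b)) {x y : V} (h : G.Reachable x y) :
    K.dist (f x) (f y) ≤ G.dist x y := by
  obtain ⟨p, hp⟩ := h.exists_walk_length_eq_dist
  obtain ⟨q, hq⟩ := p.exists_length_le_of_adj_eq_or_adj hf
  exact (dist_le q).trans (hp ▸ hq)

theorem Walk.mem_support_of_exits_through {S : Set V} {w : V}
    (hS : ∀ ⦃a b⦄, G.Adj a b → a ∈ S → b ∉ S → a = w) {x y : V} (p : G.Walk x y)
    (hx : x ∈ S) (hy : y ∉ S) : w ∈ p.support := by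
  induction p with
  | nil => exact absurd hx hy
  | @cons a b _ hab _ ih =>
    by_cases hb : b ∈ S
    · exact List.mem_cons_of_mem _ (ih hb hy)
    · simp [hS hab hx hb]

theorem Reachable.dist_eq_add_of_exits_through {S : Set V} {w : V}
    (hS : ∀ ⦃a b⦄, G.Adj a b → a ∈ S → b ∉ S → a = w) {x y : V} (hx : x ∈ S) (hy : y ∉ S)
    (h : G.Reachable x y) : G.dist x y = G.dist x w + G.dist w y := by
  classical
  obtain ⟨p, hp⟩ := h.exists_walk_length_eq_dist
  have hw := p.mem_support_of_exits_through hS hx hy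
  refine le_antisymm (Reachable.dist_triangle_left ⟨p.takeUntil w hw⟩ y) ?_
  rw [← hp, ← congrArg Walk.length (p.take_spec hw), Walk.length_append]
  exact add_le_add (dist_le _) (dist_le _)

theorem Connected.dist_pendant (hG : G.Connected) {u v : V} (hv : ∀ b, G.Adj v b ↔ b = u)
    {y : V} (hy : y ≠ v) : G.dist v y = G.dist u y + 1 := by
  have := (hG.preconnected y v).dist_eq_add_of_exits_through (S := {v}ᶜ) (w := u)
    (fun a b hab _ hb => (hv a).mp (Set.notMem_compl_iff.mp hb ▸ hab).symm) hy (by simp)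
  rw [dist_comm, this, dist_comm, dist_eq_one_iff_adj.mpr ((hv u).mpr rfl).symm]

theorem exists_adj_ne_of_one_lt_degree {v : V} [Fintype (G.neighborSet v)]
    (h : 1 < G.degree v) (w : V) : ∃ a, G.Adj v a ∧ a ≠ w := by
  obtain ⟨a, ha, haw⟩ := Finset.exists_mem_ne (G.card_neighborFinset_eq_degree v ▸ h) w
  exact ⟨a, (G.mem_neighborFinset v a).mp ha, haw⟩

end SimpleGraph

open Matrix

section DistMatrix

variable {V : Type*} [Fintype V] {G : SimpleGraph V}

theorem isHermitian_distMatrix (G : SimpleGraph V) : (distMatrix G).IsHermitian := by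
  ext i j
  simp [distMatrix, dist_comm]

theorem IsDistPerronVector.dotProduct_self {Y : V → ℝ} (hY : IsDistPerronVector G Y) :
    Y ⬝ᵥ Y = 1 := by
  simpa [dotProduct, sq] using hY.2.1

theorem IsDistPerronVector.sum_dist_mul {Y : V → ℝ} (hY : IsDistPerronVector G Y) (i : V) :
    ∑ j, (G.dist i j : ℝ) * Y j = distSpectralRadius G * Y i := by
  simpa [distMatrix, mulVec, dotProduct] using congrFun hY.2.2 i

theorem IsDistPerronVector.lt_add_of_pendant {Y : V → ℝ} (hY : IsDistPerronVector G Y)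
    (hG : G.Connected) {u v : V} (hv : ∀ b, G.Adj v b ↔ b = u) (a : V) : Y v < Y u + Y a := by
  classical
  set ρ := distSpectralRadius G
  have hpendant : ρ * Y v - ρ * Y u = ∑ j, Y j - 2 * Y v := by
    rw [← hY.sum_dist_mul, ← hY.sum_dist_mul, ← Finset.sum_sub_distrib]
    calc ∑ j, ((G.dist v j : ℝ) * Y j - G.dist u j * Y j)
        = ∑ j, (Y j - if j = v then 2 * Y v else 0) := by
          refine Finset.sum_congr rfl fun j _ => ?_
          rcases eq_or_ne j v with rfl | hj
          · rw [dist_self, G.dist_comm, dist_eq_one_iff_adj.mpr ((hv u).mpr rfl)]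
            simp
            ring
          · rw [hG.dist_pendant hv hj, if_neg hj]
            push_cast
            ring
      _ = ∑ j, Y j - 2 * Y v := by simp [Finset.sum_sub_distrib]
  have hrow : ∑ j, Y j - Y a ≤ ρ * Y a := by
    rw [← hY.sum_dist_mul]
    calc ∑ j, Y j - Y a = ∑ j, (Y j - if j = a then Y j else 0) := by
          simp [Finset.sum_sub_distrib]
      _ ≤ ∑ j, (G.dist a j : ℝ) * Y j := by
          refine Finset.sum_le_sum fun j _ => ?_
          rcases eq_or_ne j a with rfl | hj
          · simp
          · rw [if_neg hj, sub_zero]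
            exact le_mul_of_one_le_left (hY.1 j).le
              (by exact_mod_cast hG.pos_dist_of_ne hj.symm)
  have hρ : 0 ≤ ρ := by
    refine nonneg_of_mul_nonneg_left ?_ (hY.1 u)
    rw [← hY.sum_dist_mul]
    exact Finset.sum_nonneg fun j _ => mul_nonneg (Nat.cast_nonneg _) (hY.1 j).le
  -- combining the two rows: `(ρ + 2) Y v ≤ ρ Y u + (ρ + 1) Y a`
  nlinarith [hY.1 u, hY.1 v, hY.1 a]

variable [DecidableEq V]

theorem distSpectralRadius_eq_rayleighSup [Nonempty V] (G : SimpleGraph V) :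
    distSpectralRadius G = (distMatrix G).rayleighSup :=
  (isHermitian_distMatrix G).sSup_eigenvalues_eq_rayleighSup

theorem dotProduct_distMatrix_mulVec_le [Nonempty V] (G : SimpleGraph V) (X : V → ℝ) :
    X ⬝ᵥ distMatrix G *ᵥ X ≤ distSpectralRadius G * (X ⬝ᵥ X) := by
  rw [distSpectralRadius_eq_rayleighSup]
  exact (distMatrix G).dotProduct_mulVec_le_rayleighSup_mul X

theorem exists_isDistPerronVector (hG : G.Connected) : ∃ X, IsDistPerronVector G X := by
  have := hG.nonempty
  obtain ⟨X, hXpos, hX⟩ := (isHermitian_distMatrix G).exists_pos_mulVec_eq_rayleighSup_smul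
    (fun i j => Nat.cast_nonneg _) (fun i j hij => Nat.cast_pos.mpr (hG.pos_dist_of_ne hij))
  have hXX : 0 < X ⬝ᵥ X :=
    dotProduct_self_pos fun h => (hXpos (Classical.arbitrary V)).ne' (congrFun h _)
  refine ⟨(√(X ⬝ᵥ X))⁻¹ • X, fun i => by simp [hXpos i, hXX], ?_, ?_⟩
  · simp only [Pi.smul_apply, smul_eq_mul, mul_pow, ← Finset.mul_sum, inv_pow,
      Real.sq_sqrt hXX.le]
    simpa [dotProduct, sq] using inv_mul_cancel₀ hXX.ne'
  · rw [mulVec_smul, hX, distSpectralRadius_eq_rayleighSup, smul_comm]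

end DistMatrix

open SimpleGraph

section ContractPlusPendant

variable {V : Type*} {G : SimpleGraph V} {u v : V}

def bridgeSide (G : SimpleGraph V) (u v : V) : Set V :=
  {x | (G.deleteEdges {s(u, v)}).Reachable u x}

theorem self_mem_bridgeSide : u ∈ bridgeSide G u v :=
  Reachable.refl u

theorem notMem_bridgeSide_of_isBridge (h : G.IsBridge s(u, v)) : v ∉ bridgeSide G u v :=
  isBridge_iff.mp h

theorem mem_bridgeSide_of_adj {a : V} (h : G.Adj u a) (ha : a ≠ v) : a ∈ bridgeSide G u v :=
  Adj.reachable <| (deleteEdges_adj ..).mpr ⟨h, by simp [ha, h.ne']⟩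

theorem notMem_bridgeSide_of_adj (hbr : G.IsBridge s(u, v)) {b : V} (h : G.Adj v b)
    (hb : b ≠ u) : b ∉ bridgeSide G u v := fun hbA =>
  notMem_bridgeSide_of_isBridge hbr <|
    hbA.trans (Adj.reachable <| (deleteEdges_adj ..).mpr ⟨h.symm, by simp [hb, h.ne']⟩)

theorem eq_and_eq_of_adj_of_mem_bridgeSide {a b : V} (hab : G.Adj a b)
    (ha : a ∈ bridgeSide G u v) (hb : b ∉ bridgeSide G u v) : a = u ∧ b = v := by
  by_cases he : s(a, b) = s(u, v)
  · rcases Sym2.eq_iff.mp he with h | ⟨-, rfl⟩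
    · exact h
    · exact absurd self_mem_bridgeSide hb
  · exact absurd (ha.trans (Adj.reachable <| (deleteEdges_adj ..).mpr ⟨hab, he⟩)) hb

theorem dist_eq_of_mem_bridgeSide_of_notMem (hG : G.Connected) (huv : G.Adj u v) {x y : V}
    (hx : x ∈ bridgeSide G u v) (hy : y ∉ bridgeSide G u v) :
    G.dist x y = G.dist x u + 1 + G.dist v y := by
  have hxu : G.dist x y = G.dist x u + G.dist u y :=
    (hG.preconnected x y).dist_eq_add_of_exits_through
      (fun a b hab ha hb => (eq_and_eq_of_adj_of_mem_bridgeSide hab ha hb).1) hx hy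
  have hyv : G.dist y u = G.dist y v + G.dist v u :=
    (hG.preconnected y u).dist_eq_add_of_exits_through (S := (bridgeSide G u v)ᶜ)
      (fun a b hab ha hb => (eq_and_eq_of_adj_of_mem_bridgeSide hab.symm (not_not.mp hb) ha).2)
      hy (not_not.mpr self_mem_bridgeSide)
  rw [hxu, G.dist_comm (u := u), hyv, G.dist_comm (u := v), dist_eq_one_iff_adj.mpr huv,
    G.dist_comm (u := y)]
  ring

theorem contractPlusPendant_adj {a b : V} :
    (contractPlusPendant G u v).Adj a b ↔ a ≠ b ∧ (s(a, b) = s(u, v) ∨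
      (a ≠ v ∧ b ≠ v ∧ (G.Adj a b ∨ (a = u ∧ G.Adj v b) ∨ (b = u ∧ G.Adj v a)))) := by
  simp only [contractPlusPendant, fromRel_adj, Sym2.eq_iff]
  grind [G.adj_comm]

theorem contractPlusPendant_adj_pendant (huv : u ≠ v) {b : V} :
    (contractPlusPendant G u v).Adj v b ↔ b = u := by
  grind [contractPlusPendant_adj]

theorem update_eq_or_contractPlusPendant_adj [DecidableEq V] (huv : u ≠ v) {a b : V}
    (hab : G.Adj a b) :
    Function.update id v u a = Function.update id v u b ∨
      (contractPlusPendant G u v).Adj (Function.update id v u a) (Function.update id v u b) := by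
  simp only [contractPlusPendant_adj, Function.update_apply, id]
  grind [G.adj_comm, G.loopless]

theorem dist_contractPlusPendant_update_le [DecidableEq V] (hG : G.Connected) (huv : G.Adj u v)
    (x y : V) :
    (contractPlusPendant G u v).dist (Function.update id v u x) (Function.update id v u y) ≤
      G.dist x y :=
  (hG.preconnected x y).dist_map_le_of_adj_eq_or_adj fun _ _ =>
    update_eq_or_contractPlusPendant_adj huv.ne

theorem contractPlusPendant_connected (hG : G.Connected) (huv : G.Adj u v) :
    (contractPlusPendant G u v).Connected := by
  classical
  refine (connected_iff_exists_forall_reachable _).mpr ⟨u, fun x => ?_⟩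
  rcases eq_or_ne x v with rfl | hx
  · exact Adj.reachable ((contractPlusPendant_adj_pendant huv.ne).mpr rfl).symm
  · simpa [hx, huv.ne] using (hG.preconnected u x).map_of_adj_eq_or_adj
      fun _ _ => update_eq_or_contractPlusPendant_adj (G := G) huv.ne

-- Retracting the far side onto `u`, or the near side onto `v`, turns every edge of `G'` into an
-- edge of `G` or a single vertex.
open Classical in
theorem dist_ite_mem_le_dist_contractPlusPendant (hG : G.Connected) (huv : G.Adj u v)
    (hbr : G.IsBridge s(u, v)) (x y : V) :
    G.dist (if x ∈ bridgeSide G u v then x else u) (if y ∈ bridgeSide G u v then y else u) ≤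
      (contractPlusPendant G u v).dist x y := by
  refine ((contractPlusPendant_connected hG huv).preconnected x y).dist_map_le_of_adj_eq_or_adj
    (f := fun z => if z ∈ bridgeSide G u v then z else u) fun a b hab => ?_
  grind [contractPlusPendant_adj, G.adj_comm, Sym2.eq_iff, self_mem_bridgeSide,
    notMem_bridgeSide_of_isBridge hbr, eq_and_eq_of_adj_of_mem_bridgeSide]

open Classical in
theorem dist_ite_notMem_le_dist_contractPlusPendant (hG : G.Connected) (huv : G.Adj u v)
    (hbr : G.IsBridge s(u, v)) (x y : V) :
    G.dist (if x ∈ bridgeSide G u v then v else x) (if y ∈ bridgeSide G u v then v else y) ≤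
      (contractPlusPendant G u v).dist x y := by
  refine ((contractPlusPendant_connected hG huv).preconnected x y).dist_map_le_of_adj_eq_or_adj
    (f := fun z => if z ∈ bridgeSide G u v then v else z) fun a b hab => ?_
  grind [contractPlusPendant_adj, G.adj_comm, Sym2.eq_iff, self_mem_bridgeSide,
    notMem_bridgeSide_of_isBridge hbr, eq_and_eq_of_adj_of_mem_bridgeSide]

theorem dist_contractPlusPendant_of_mem (hG : G.Connected) (huv : G.Adj u v)
    (hbr : G.IsBridge s(u, v)) {x y : V} (hx : x ∈ bridgeSide G u v)
    (hy : y ∈ bridgeSide G u v) : (contractPlusPendant G u v).dist x y = G.dist x y := by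
  classical
  have hxv : x ≠ v := ne_of_mem_of_not_mem hx (notMem_bridgeSide_of_isBridge hbr)
  have hyv : y ≠ v := ne_of_mem_of_not_mem hy (notMem_bridgeSide_of_isBridge hbr)
  refine le_antisymm ?_ ?_
  · simpa [hxv, hyv] using dist_contractPlusPendant_update_le hG huv x y
  · simpa [hx, hy] using dist_ite_mem_le_dist_contractPlusPendant hG huv hbr x y

theorem dist_contractPlusPendant_of_notMem (hG : G.Connected) (huv : G.Adj u v)
    (hbr : G.IsBridge s(u, v)) {x y : V} (hx : x ∉ bridgeSide G u v) (hxv : x ≠ v)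
    (hy : y ∉ bridgeSide G u v) (hyv : y ≠ v) :
    (contractPlusPendant G u v).dist x y = G.dist x y := by
  classical
  refine le_antisymm ?_ ?_
  · simpa [hxv, hyv] using dist_contractPlusPendant_update_le hG huv x y
  · simpa [hx, hy] using dist_ite_notMem_le_dist_contractPlusPendant hG huv hbr x y

theorem dist_contractPlusPendant_left_of_notMem (hG : G.Connected) (huv : G.Adj u v)
    (hbr : G.IsBridge s(u, v)) {y : V} (hy : y ∉ bridgeSide G u v) (hyv : y ≠ v) :
    (contractPlusPendant G u v).dist u y = G.dist v y := by
  classical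
  refine le_antisymm ?_ ?_
  · simpa [hyv] using dist_contractPlusPendant_update_le hG huv v y
  · simpa [hy, self_mem_bridgeSide] using
      dist_ite_notMem_le_dist_contractPlusPendant hG huv hbr u y

theorem dist_contractPlusPendant_pendant (hG : G.Connected) (huv : G.Adj u v) {y : V}
    (hy : y ≠ v) :
    (contractPlusPendant G u v).dist v y = (contractPlusPendant G u v).dist u y + 1 :=
  (contractPlusPendant_connected hG huv).dist_pendant
    (fun _ => contractPlusPendant_adj_pendant huv.ne) hy

theorem dist_contractPlusPendant_pendant_of_mem (hG : G.Connected) (huv : G.Adj u v)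
    (hbr : G.IsBridge s(u, v)) {x : V} (hx : x ∈ bridgeSide G u v) :
    (contractPlusPendant G u v).dist v x = G.dist v x := by
  have hxv : x ≠ v := ne_of_mem_of_not_mem hx (notMem_bridgeSide_of_isBridge hbr)
  rw [dist_contractPlusPendant_pendant hG huv hxv,
    dist_contractPlusPendant_of_mem hG huv hbr self_mem_bridgeSide hx, G.dist_comm (u := v),
    dist_eq_of_mem_bridgeSide_of_notMem hG huv hx (notMem_bridgeSide_of_isBridge hbr), dist_self,
    G.dist_comm (u := x)]

theorem dist_contractPlusPendant_pendant_of_notMem (hG : G.Connected) (huv : G.Adj u v)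
    (hbr : G.IsBridge s(u, v)) {y : V} (hy : y ∉ bridgeSide G u v) (hyv : y ≠ v) :
    (contractPlusPendant G u v).dist v y = G.dist v y + 1 := by
  rw [dist_contractPlusPendant_pendant hG huv hyv,
    dist_contractPlusPendant_left_of_notMem hG huv hbr hy hyv]

theorem dist_eq_dist_contractPlusPendant_add_one (hG : G.Connected) (huv : G.Adj u v)
    (hbr : G.IsBridge s(u, v)) {x y : V} (hx : x ∈ bridgeSide G u v)
    (hy : y ∉ bridgeSide G u v) (hyv : y ≠ v) :
    G.dist x y = (contractPlusPendant G u v).dist x y + 1 := by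
  have hexit : ∀ ⦃a b⦄, (contractPlusPendant G u v).Adj a b → a ∈ bridgeSide G u v →
      b ∉ bridgeSide G u v → a = u := fun a b hab ha hb => by
    grind [contractPlusPendant_adj, G.adj_comm, Sym2.eq_iff, notMem_bridgeSide_of_isBridge hbr,
      eq_and_eq_of_adj_of_mem_bridgeSide]
  rw [((contractPlusPendant_connected hG huv).preconnected x y).dist_eq_add_of_exits_through
      hexit hx hy,
    dist_contractPlusPendant_of_mem hG huv hbr hx self_mem_bridgeSide,
    dist_contractPlusPendant_left_of_notMem hG huv hbr hy hyv,
    dist_eq_of_mem_bridgeSide_of_notMem hG huv hx hy]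
  ring

noncomputable def vSideVec (G : SimpleGraph V) (u v : V) : V → ℝ :=
  ((bridgeSide G u v)ᶜ \ {v}).indicator 1

theorem vSideVec_dotProduct_pos [Fintype V] {Y : V → ℝ} (hY : ∀ i, 0 < Y i) {b : V}
    (hb : b ∉ bridgeSide G u v) (hbv : b ≠ v) : 0 < vSideVec G u v ⬝ᵥ Y := by
  refine Finset.sum_pos' (fun j _ => mul_nonneg ?_ (hY j).le) ⟨b, Finset.mem_univ b, ?_⟩
  · exact Set.indicator_nonneg (fun _ _ => zero_le_one) j
  · simp [vSideVec, hb, hbv, hY b]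

variable [DecidableEq V]

noncomputable def uSideVec (G : SimpleGraph V) (u v : V) : V → ℝ :=
  (bridgeSide G u v).indicator 1 - Pi.single v 1

theorem dist_eq_dist_contractPlusPendant_add (hG : G.Connected) (huv : G.Adj u v)
    (hbr : G.IsBridge s(u, v)) (x y : V) :
    (G.dist x y : ℝ) = (contractPlusPendant G u v).dist x y +
      vSideVec G u v x * uSideVec G u v y + uSideVec G u v x * vSideVec G u v y := by
  set G' := contractPlusPendant G u v
  have hvA : v ∉ bridgeSide G u v := notMem_bridgeSide_of_isBridge hbr
  have cases : ∀ z, z ∈ bridgeSide G u v ∧ z ≠ v ∨ v = z ∨ z ∉ bridgeSide G u v ∧ z ≠ v := by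
    tauto
  rcases cases x with ⟨hx, hxv⟩ | rfl | ⟨hx, hxv⟩ <;>
    rcases cases y with ⟨hy, hyv⟩ | rfl | ⟨hy, hyv⟩ <;>
    simp only [uSideVec, vSideVec, Pi.sub_apply, Set.indicator, Set.mem_sdiff, Set.mem_compl_iff,
      Set.mem_singleton_iff, Pi.single_apply, Pi.one_apply, *] <;> norm_num
  · rw [dist_contractPlusPendant_of_mem hG huv hbr hx hy]
  · rw [G.dist_comm, G'.dist_comm, dist_contractPlusPendant_pendant_of_mem hG huv hbr hx]
  · rw [dist_eq_dist_contractPlusPendant_add_one hG huv hbr hx hy hyv]; push_cast; ring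
  · rw [dist_contractPlusPendant_pendant_of_mem hG huv hbr hy]
  · rw [dist_contractPlusPendant_pendant_of_notMem hG huv hbr hy hyv]; push_cast; ring
  · rw [G.dist_comm, G'.dist_comm, dist_eq_dist_contractPlusPendant_add_one hG huv hbr hy hx hxv]
    push_cast; ring
  · rw [G.dist_comm, G'.dist_comm, dist_contractPlusPendant_pendant_of_notMem hG huv hbr hx hxv]
    push_cast; ring
  · rw [dist_contractPlusPendant_of_notMem hG huv hbr hx hxv hy hyv]

variable [Fintype V]

theorem distMatrix_eq_contractPlusPendant_add (hG : G.Connected) (huv : G.Adj u v)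
    (hbr : G.IsBridge s(u, v)) :
    distMatrix G = distMatrix (contractPlusPendant G u v) +
      vecMulVec (vSideVec G u v) (uSideVec G u v) +
        vecMulVec (uSideVec G u v) (vSideVec G u v) := by
  ext x y
  simp only [distMatrix, Matrix.add_apply, vecMulVec_apply]
  exact dist_eq_dist_contractPlusPendant_add hG huv hbr x y

theorem dotProduct_distMatrix_mulVec_eq (hG : G.Connected) (huv : G.Adj u v)
    (hbr : G.IsBridge s(u, v)) {Y : V → ℝ}
    (hY : IsDistPerronVector (contractPlusPendant G u v) Y) :
    Y ⬝ᵥ distMatrix G *ᵥ Y = distSpectralRadius (contractPlusPendant G u v) +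
      2 * (uSideVec G u v ⬝ᵥ Y) * (vSideVec G u v ⬝ᵥ Y) := by
  rw [distMatrix_eq_contractPlusPendant_add hG huv hbr, add_mulVec, add_mulVec, dotProduct_add,
    dotProduct_add, hY.2.2, dotProduct_smul, hY.dotProduct_self, dotProduct_mulVec,
    dotProduct_mulVec, vecMul_vecMulVec, vecMul_vecMulVec]
  simp only [smul_dotProduct, smul_eq_mul, dotProduct_comm Y]
  ring

theorem uSideVec_dotProduct_pos (hG : G.Connected) (huv : G.Adj u v) {Y : V → ℝ}
    (hY : IsDistPerronVector (contractPlusPendant G u v) Y) {a : V} (ha : a ∈ bridgeSide G u v)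
    (hau : a ≠ u) : 0 < uSideVec G u v ⬝ᵥ Y := by
  have hside : Y u + Y a ≤ (bridgeSide G u v).indicator 1 ⬝ᵥ Y := by
    have := Finset.add_le_sum (f := fun j => (bridgeSide G u v).indicator (1 : V → ℝ) j * Y j)
      (fun j _ => mul_nonneg (Set.indicator_nonneg (fun _ _ => zero_le_one) j) (hY.1 j).le)
      (Finset.mem_univ u) (Finset.mem_univ a) hau.symm
    simpa [dotProduct, self_mem_bridgeSide, ha] using this
  have hpendant := hY.lt_add_of_pendant (contractPlusPendant_connected hG huv)
    (fun _ => contractPlusPendant_adj_pendant huv.ne) a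
  rw [uSideVec, sub_dotProduct, single_dotProduct]
  linarith

end ContractPlusPendant

/-- Lemma 2.2: if `uv` is a cut-edge of the connected graph `G` which is not a pendant edge,
then contracting `uv` and adding a pendant edge strictly decreases the distance spectral
radius. -/
theorem stmt2 {V : Type*} [Fintype V] [DecidableEq V] (G : SimpleGraph V)
    [DecidableRel G.Adj] (hG : G.Connected) (u v : V) (huv : G.Adj u v)
    (hcut : ¬ (G.deleteEdges {s(u, v)}).Connected)
    (hu : 2 ≤ G.degree u) (hv : 2 ≤ G.degree v) :
    distSpectralRadius G > distSpectralRadius (contractPlusPendant G u v) := by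
  have hbr : G.IsBridge s(u, v) := by
    by_contra h
    exact hcut (hG.connected_delete_edge_of_not_isBridge h)
  obtain ⟨Y, hY⟩ := exists_isDistPerronVector (contractPlusPendant_connected hG huv)
  obtain ⟨a, hua, hav⟩ := exists_adj_ne_of_one_lt_degree hu v
  obtain ⟨b, hvb, hbu⟩ := exists_adj_ne_of_one_lt_degree hv u
  have hα := uSideVec_dotProduct_pos hG huv hY (mem_bridgeSide_of_adj hua hav) hua.ne'
  have hβ := vSideVec_dotProduct_pos hY.1 (notMem_bridgeSide_of_adj hbr hvb hbu) hvb.ne'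
  have := hG.nonempty
  have hρ := dotProduct_distMatrix_mulVec_le G Y
  rw [dotProduct_distMatrix_mulVec_eq hG huv hbr hY, hY.dotProduct_self, mul_one] at hρ
  linarith [mul_pos hα hβ]
end

section
/- Let G be the graph obtained from a nontrivial connected graph G' by attaching at a fixed vertex of G' two pendant paths v_1 v_2 ⋯ v_k and u_1 u_2 ⋯ u_k of lengths k−1 and k respectively, where v_1 is identified appropriately so that the attachment vertex is adjacent to u_1 and v_1 lies on the shorter branch (k ≥ 2). Let X be the distance Perron vector of G, with entry x_w at vertex w. Then x_{v_1} < x_{u_1}, and for each i with 2 ≤ i ≤ k, x_{u_{i−1}} < x_{v_i} < x_{u_i}. -/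
/-!
Let `f d` and `g d` be the Perron entries at depth `d` below `w` on the short and on the long arm
(`f 0 = g 0 = x_w`), and let `S = ∑ x`. One step down an arm brings the rest of that arm one step
closer and every other vertex one step farther, so `ρ (a (d+1) - a d) = S - 2 ∑_{e > d} a e` for
`a = f, g`. Hence `α n = g (n+1) - f n` and `δ n = f n - g n` both solve `ρ Δ²c = 2c`, and such a
solution keeps moving away from `0` once it starts to. Starting from `δ 0 = 0`, a nonpositive `δ`
would violate the equation at the end of the arms, which involves `g k > 0`. For `α` one argues
from the end of the arms upwards: a nonpositive `α` would give
`S ≤ 2 ∑_{d ≥ 1} g d ≤ x_w + ∑_{d ≥ 1} f d + ∑_{d ≥ 1} g d`, impossible since `G'` has a vertex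
other than `w`.
-/

open SimpleGraph

/-- The graph obtained from `G` by attaching at `w` two pendant paths, of `p` and `q`
new vertices respectively. -/
def attachPaths {V : Type*} (G : SimpleGraph V) (w : V) (p q : ℕ) :
    SimpleGraph (V ⊕ (Fin p ⊕ Fin q)) :=
  SimpleGraph.fromRel (fun a b =>
    match a, b with
    | Sum.inl x, Sum.inl y => G.Adj x y
    | Sum.inl x, Sum.inr (Sum.inl i) => x = w ∧ (i : ℕ) = 0
    | Sum.inl x, Sum.inr (Sum.inr i) => x = w ∧ (i : ℕ) = 0
    | Sum.inr (Sum.inl i), Sum.inr (Sum.inl j) => (i : ℕ) + 1 = (j : ℕ)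
    | Sum.inr (Sum.inr i), Sum.inr (Sum.inr j) => (i : ℕ) + 1 = (j : ℕ)
    | _, _ => False)

/-- In `attachPaths G w (k-1) k`, the vertex `v_i` (1-based index `i = (·:ℕ)+1`):
`v_1` is the attachment vertex `w` itself, and `v_2, …, v_k` are the `k-1` new
vertices of the shorter arm. -/
def armV {V : Type*} (w : V) (k : ℕ) (i : Fin k) : V ⊕ (Fin (k - 1) ⊕ Fin k) :=
  if _h : (i : ℕ) = 0 then Sum.inl w
  else Sum.inr (Sum.inl ⟨(i : ℕ) - 1, by have := i.isLt; omega⟩)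

/-- In `attachPaths G w (k-1) k`, the vertex `u_i` (1-based index `i = (·:ℕ)+1`) of the
longer arm. -/
def armU {V : Type*} (_w : V) (k : ℕ) (i : Fin k) : V ⊕ (Fin (k - 1) ⊕ Fin k) :=
  Sum.inr (Sum.inr i)

open SimpleGraph Finset

section Walks

variable {W : Type*} {H : SimpleGraph W}

lemma SimpleGraph.Adj.dist_le_dist_add_one {x y : W} (h : H.Adj x y) (z : W) :
    H.dist x z ≤ H.dist y z + 1 := by
  rw [SimpleGraph.dist_comm, SimpleGraph.dist_comm (u := y)]
  rcases h.symm.diff_dist_adj (u := z) with h' | h' | h' <;> omega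

lemma SimpleGraph.Walk.apply_le_apply_add_length {φ : W → ℕ}
    (hφ : ∀ a b, H.Adj a b → φ a ≤ φ b + 1) {a c : W} (P : H.Walk a c) :
    φ a ≤ φ c + P.length := by
  induction P with
  | nil => simp
  | cons h _ ih => grind [Walk.length_cons]

lemma SimpleGraph.exists_walk_length_eq_sub {f : ℕ → W} {n : ℕ}
    (hf : ∀ i < n, H.Adj (f i) (f (i + 1))) {i j : ℕ} (hij : i ≤ j) (hj : j ≤ n) :
    ∃ P : H.Walk (f i) (f j), P.length = j - i := by
  induction j, hij using Nat.le_induction with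
  | base => exact ⟨.nil, by simp⟩
  | succ j hij ih =>
    obtain ⟨P, hP⟩ := ih (by omega)
    exact ⟨P.concat (hf j (by omega)), by rw [Walk.length_concat, hP]; omega⟩

end Walks

section DistanceEigenvector

variable {W : Type*} [Fintype W] {H : SimpleGraph W} {X : W → ℝ} {ρ : ℝ}

lemma mul_eq_sum_dist_mul (hX : (distMatrix H).mulVec X = ρ • X) (a : W) :
    ρ * X a = ∑ z, (H.dist a z : ℝ) * X z :=
  (congrFun hX a).symm

theorem mul_sub_eq_of_dist (hX : (distMatrix H).mulVec X = ρ • X) {a b : W} (B : Finset W)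
    (h_in : ∀ z ∈ B, H.dist b z = H.dist a z + 1)
    (h_out : ∀ z ∉ B, H.dist a z = H.dist b z + 1) :
    ρ * (X a - X b) = ∑ z, X z - 2 * ∑ z ∈ B, X z := by
  classical
  have key (z : W) :
      ((H.dist a z : ℝ) - H.dist b z) * X z = X z - 2 * if z ∈ B then X z else 0 := by
    by_cases hz : z ∈ B
    · simp only [hz, h_in z hz, ↓reduceIte, Nat.cast_add, Nat.cast_one]
      ring
    · simp [hz, h_out z hz]
  rw [mul_sub, mul_eq_sum_dist_mul hX, mul_eq_sum_dist_mul hX, ← sum_sub_distrib]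
  simp_rw [← sub_mul, key, sum_sub_distrib, ← mul_sum, sum_ite_mem, univ_inter]

theorem distMatrix_eigenvalue_pos (hH : H.Connected) {a b : W} (hab : a ≠ b)
    (hXpos : ∀ v, 0 < X v) (hX : (distMatrix H).mulVec X = ρ • X) : 0 < ρ := by
  have hle : (H.dist a b : ℝ) * X b ≤ ρ * X a := mul_eq_sum_dist_mul hX a ▸
    single_le_sum (f := fun z => (H.dist a z : ℝ) * X z)
      (fun z _ => mul_nonneg (Nat.cast_nonneg _) (hXpos z).le) (mem_univ b)
  have hd : (0 : ℝ) < H.dist a b := by exact_mod_cast hH.pos_dist_of_ne hab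
  exact pos_of_mul_pos_left ((mul_pos hd (hXpos b)).trans_le hle) (hXpos a).le

end DistanceEigenvector

lemma sum_range_succ_eq_sum_Ioc {M : Type*} [AddCommMonoid M] (y : ℕ → M) (m : ℕ) :
    ∑ i ∈ range m, y (i + 1) = ∑ d ∈ Ioc 0 m, y d := by
  rw [range_eq_Ico, sum_Ico_add', Finset.Ico_add_one_add_one_eq_Ioc]

/-- The equations satisfied by a distance eigenvector (eigenvalue `ρ`, total weight `S`) along a
pendant path `a 0, a 1, …, a m` hanging at the vertex with entry `a 0`. -/
def IsPendantProfile (ρ S : ℝ) (m : ℕ) (a : ℕ → ℝ) : Prop :=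
  ∀ n < m, ρ * (a (n + 1) - a n) = S - 2 * ∑ d ∈ Ioc n m, a d

namespace IsPendantProfile

variable {ρ S : ℝ} {m : ℕ} {a : ℕ → ℝ}

lemma second_diff (h : IsPendantProfile ρ S m a) {n : ℕ} (hn : n + 2 ≤ m) :
    ρ * (a (n + 2) - 2 * a (n + 1) + a n) = 2 * a (n + 1) := by
  have h0 := h n (by omega)
  have h1 := h (n + 1) (by omega)
  rw [← sum_Ioc_consecutive _ (Nat.le_succ n) (by omega : n + 1 ≤ m), Nat.Ioc_succ_singleton,
    sum_singleton] at h0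
  linarith

lemma last (h : IsPendantProfile ρ S m a) {n : ℕ} (hn : n + 1 = m) :
    ρ * (a (n + 1) - a n) = S - 2 * a (n + 1) := by
  simpa [← hn, Nat.Ioc_succ_singleton] using h n (by omega)

end IsPendantProfile

section SecondDifference

variable {ρ : ℝ} {m : ℕ} {a : ℕ → ℝ}

lemma monotoneOn_of_second_diff (hρ : 0 < ρ)
    (ha : ∀ n, n + 2 ≤ m → ρ * (a (n + 2) - 2 * a (n + 1) + a n) = 2 * a (n + 1))
    (h01 : a 0 ≤ a 1) (h1 : 0 ≤ a 1) : MonotoneOn a (Set.Iic m) := by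
  have step : ∀ n, n + 1 ≤ m → a n ≤ a (n + 1) ∧ 0 ≤ a (n + 1) := by
    intro n
    induction n with
    | zero => exact fun _ => ⟨h01, h1⟩
    | succ n ih =>
      intro hn
      obtain ⟨hle, hnn⟩ := ih (by omega)
      have hrec := ha n (by omega)
      have : 0 ≤ ρ * (a (n + 2) - a (n + 1)) := by nlinarith
      have := (mul_nonneg_iff_of_pos_left hρ).1 this
      constructor <;> linarith
  refine monotoneOn_of_le_succ Set.ordConnected_Iic fun n _ _ hn => ?_
  simpa using (step n (by simpa using hn)).1

lemma antitoneOn_of_second_diff (hρ : 0 < ρ)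
    (ha : ∀ n, n + 2 ≤ m + 1 → ρ * (a (n + 2) - 2 * a (n + 1) + a n) = 2 * a (n + 1))
    (hm : a (m + 1) ≤ a m) (hm' : 0 ≤ a m) : AntitoneOn a (Set.Iic (m + 1)) := by
  have hrev : MonotoneOn (fun n => a (m + 1 - n)) (Set.Iic (m + 1)) := by
    refine monotoneOn_of_second_diff hρ (fun n hn => ?_) (by simpa using hm) (by simpa using hm')
    rw [show m + 1 - n = m + 1 - (n + 2) + 2 by omega,
      show m + 1 - (n + 1) = m + 1 - (n + 2) + 1 by omega]
    linarith [ha (m + 1 - (n + 2)) (by omega)]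
  intro i hi j hj hij
  simp only [Set.mem_Iic] at hi hj
  simpa [Nat.sub_sub_self hi, Nat.sub_sub_self hj] using
    hrev (a := m + 1 - j) (b := m + 1 - i) (by simp) (by simp) (by omega)

end SecondDifference

section Interlacing

variable {ρ S : ℝ} {k : ℕ} {f g : ℕ → ℝ}

theorem pendant_short_lt_long_succ (hρ : 0 < ρ) (hk : 2 ≤ k)
    (hf : IsPendantProfile ρ S (k - 1) f) (hg : IsPendantProfile ρ S k g) (h0 : f 0 = g 0)
    (hS : f 0 + ∑ d ∈ Ioc 0 (k - 1), f d + ∑ d ∈ Ioc 0 k, g d < S) :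
    ∀ n < k, f n < g (n + 1) := by
  obtain ⟨j, rfl⟩ := Nat.exists_eq_add_of_le' hk
  rw [show j + 2 - 1 = j + 1 by omega] at hf hS
  set α : ℕ → ℝ := fun n => g (n + 1) - f n
  have hrec (n : ℕ) (hn : n + 2 ≤ j + 1) :
      ρ * (α (n + 2) - 2 * α (n + 1) + α n) = 2 * α (n + 1) := by
    have h1 := hg.second_diff (n := n + 1) (by omega)
    have h2 := hf.second_diff hn
    simp only [α, add_assoc, Nat.reduceAdd] at h1 h2 ⊢
    linarith
  have hlast : ρ * (α j - α (j + 1)) = 2 * α (j + 1) := by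
    linarith [hg.last (n := j + 1) rfl, hf.last (n := j) rfl]
  by_cases hpos : 0 < α (j + 1)
  · intro n hn
    have := antitoneOn_of_second_diff hρ hrec (by nlinarith) (by nlinarith)
      (Set.mem_Iic.2 (by omega : n ≤ j + 1)) (by simp) (by omega : n ≤ j + 1)
    simp only [α] at this hpos
    linarith
  -- Otherwise `α ≤ 0` throughout, and the equation at the top of the long arm contradicts `hS`.
  have hneg : AntitoneOn (-α) (Set.Iic (j + 1)) :=
    antitoneOn_of_second_diff hρ (fun n hn => by simp only [Pi.neg_apply]; linarith [hrec n hn])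
      (by simp only [Pi.neg_apply]; nlinarith) (by simp only [Pi.neg_apply]; nlinarith)
  have hle (n : ℕ) (hn : n < j + 2) : g (n + 1) ≤ f n := by
    have := hneg (Set.mem_Iic.2 (by omega : n ≤ j + 1)) (by simp) (by omega : n ≤ j + 1)
    simp only [Pi.neg_apply, α] at this hpos
    linarith
  have hsum : ∑ d ∈ Ioc 0 (j + 2), g d ≤ f 0 + ∑ d ∈ Ioc 0 (j + 1), f d := by
    rw [← sum_range_succ_eq_sum_Ioc, ← sum_range_succ_eq_sum_Ioc, add_comm (f 0),
      ← sum_range_succ']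
    exact sum_le_sum fun n hn => hle n (mem_range.1 hn)
  have h1 := hg 0 (by omega)
  have := hle 0 (by omega)
  nlinarith

theorem pendant_long_lt_short (hρ : 0 < ρ) (hk : 2 ≤ k) (hf : IsPendantProfile ρ S (k - 1) f)
    (hg : IsPendantProfile ρ S k g) (h0 : f 0 = g 0) (hgk : 0 < g k) :
    ∀ n, 0 < n → n < k → g n < f n := by
  obtain ⟨j, rfl⟩ := Nat.exists_eq_add_of_le' hk
  rw [show j + 2 - 1 = j + 1 by omega] at hf
  set δ : ℕ → ℝ := fun n => f n - g n
  have hδ0 : δ 0 = 0 := by simp [δ, h0]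
  have hrec (n : ℕ) (hn : n + 2 ≤ j + 1) :
      ρ * (δ (n + 2) - 2 * δ (n + 1) + δ n) = 2 * δ (n + 1) := by
    linarith [hf.second_diff hn, hg.second_diff (by omega : n + 2 ≤ j + 2)]
  have hlast : ρ * (δ (j + 1) - δ j) = 2 * g (j + 2) - 2 * δ (j + 1) := by
    have h1 := hf j (by omega)
    have h2 := hg j (by omega)
    rw [Nat.Ioc_succ_singleton, sum_singleton] at h1
    rw [sum_Ioc_succ_top (by omega), Nat.Ioc_succ_singleton, sum_singleton] at h2
    linarith
  by_cases hδ1 : 0 < δ 1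
  · intro n hn0 hnk
    have := monotoneOn_of_second_diff hρ hrec (by linarith) hδ1.le
      (by simp : 1 ∈ Set.Iic (j + 1)) (Set.mem_Iic.2 (by omega : n ≤ j + 1)) hn0
    simp only [δ] at this hδ1
    linarith
  -- Otherwise `δ` decreases from `δ 0 = 0`, which the equation at the end of the arms forbids.
  have hneg : MonotoneOn (-δ) (Set.Iic (j + 1)) :=
    monotoneOn_of_second_diff hρ (fun n hn => by simp only [Pi.neg_apply]; linarith [hrec n hn])
      (by simp only [Pi.neg_apply]; linarith) (by simp only [Pi.neg_apply]; linarith)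
  have h1 := hneg (by simp : j ∈ Set.Iic (j + 1)) (by simp : j + 1 ∈ Set.Iic (j + 1)) (by omega)
  have h2 := hneg (by simp : 0 ∈ Set.Iic (j + 1)) (by simp : j + 1 ∈ Set.Iic (j + 1)) (by omega)
  simp only [Pi.neg_apply] at h1 h2
  nlinarith

end Interlacing

section AttachPaths

variable {V : Type*} (G : SimpleGraph V) (w : V) (p q : ℕ)

/-- Distances in `attachPaths G w p q`; the arm vertex indexed by `t` lies at depth `t + 1`
below `w`. -/
noncomputable def attachPathsDist : V ⊕ (Fin p ⊕ Fin q) → V ⊕ (Fin p ⊕ Fin q) → ℕ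
  | .inl x, .inl y => G.dist x y
  | .inl x, .inr (.inl t) | .inr (.inl t), .inl x => G.dist x w + t + 1
  | .inl x, .inr (.inr t) | .inr (.inr t), .inl x => G.dist x w + t + 1
  | .inr (.inl s), .inr (.inl t) => max (s - t : ℕ) (t - s)
  | .inr (.inr s), .inr (.inr t) => max (s - t : ℕ) (t - s)
  | .inr (.inl s), .inr (.inr t) | .inr (.inr t), .inr (.inl s) => s + t + 2

/-- The vertex at depth `d` on the arm of `p` new vertices (junk value `inl w` for `d > p`). -/
def leftArm : ℕ → V ⊕ (Fin p ⊕ Fin q)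
  | 0 => .inl w
  | d + 1 => if h : d < p then .inr (.inl ⟨d, h⟩) else .inl w

/-- The vertex at depth `d` on the arm of `q` new vertices (junk value `inl w` for `d > q`). -/
def rightArm : ℕ → V ⊕ (Fin p ⊕ Fin q)
  | 0 => .inl w
  | d + 1 => if h : d < q then .inr (.inr ⟨d, h⟩) else .inl w

def attachPathsBase : G →g attachPaths G w p q where
  toFun := .inl
  map_rel' h := by simp [attachPaths, h, h.ne]

variable {G w p q}

@[simp] lemma leftArm_zero : leftArm w p q 0 = .inl w := rfl

@[simp] lemma rightArm_zero : rightArm w p q 0 = .inl w := rfl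

lemma leftArm_succ_of_lt {d : ℕ} (h : d < p) : leftArm w p q (d + 1) = .inr (.inl ⟨d, h⟩) := by
  simp [leftArm, h]

lemma rightArm_succ_of_lt {d : ℕ} (h : d < q) : rightArm w p q (d + 1) = .inr (.inr ⟨d, h⟩) := by
  simp [rightArm, h]

@[simp] lemma leftArm_succ (t : Fin p) : leftArm w p q (t + 1) = .inr (.inl t) := by
  simp [leftArm]

@[simp] lemma rightArm_succ (t : Fin q) : rightArm w p q (t + 1) = .inr (.inr t) := by
  simp [rightArm]

lemma leftArm_injOn : Set.InjOn (leftArm w p q) (Set.Iic p) := by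
  intro i hi j hj h
  simp only [Set.mem_Iic] at hi hj
  rcases i with _ | i <;> rcases j with _ | j <;>
    simp (disch := omega) only [leftArm_zero, leftArm_succ_of_lt, reduceCtorEq, Sum.inr.injEq,
      Sum.inl.injEq, Fin.mk.injEq] at h ⊢
  omega

lemma rightArm_injOn : Set.InjOn (rightArm w p q) (Set.Iic q) := by
  intro i hi j hj h
  simp only [Set.mem_Iic] at hi hj
  rcases i with _ | i <;> rcases j with _ | j <;>
    simp (disch := omega) only [rightArm_zero, rightArm_succ_of_lt, reduceCtorEq, Sum.inr.injEq,
      Fin.mk.injEq] at h ⊢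
  omega

lemma leftArm_adj_succ {d : ℕ} (hd : d < p) :
    (attachPaths G w p q).Adj (leftArm w p q d) (leftArm w p q (d + 1)) := by
  rcases d with _ | d
  · simp [leftArm, attachPaths, hd]
  · simp [leftArm, attachPaths, hd, (by omega : d < p)]

lemma rightArm_adj_succ {d : ℕ} (hd : d < q) :
    (attachPaths G w p q).Adj (rightArm w p q d) (rightArm w p q (d + 1)) := by
  rcases d with _ | d
  · simp [rightArm, attachPaths, hd]
  · simp [rightArm, attachPaths, hd, (by omega : d < q)]

lemma exists_walk_leftArm {i j : ℕ} (hij : i ≤ j) (hj : j ≤ p) :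
    ∃ P : (attachPaths G w p q).Walk (leftArm w p q i) (leftArm w p q j), P.length = j - i :=
  exists_walk_length_eq_sub (f := leftArm w p q) (fun _ hd => leftArm_adj_succ hd) hij hj

lemma exists_walk_rightArm {i j : ℕ} (hij : i ≤ j) (hj : j ≤ q) :
    ∃ P : (attachPaths G w p q).Walk (rightArm w p q i) (rightArm w p q j), P.length = j - i :=
  exists_walk_length_eq_sub (f := rightArm w p q) (fun _ hd => rightArm_adj_succ hd) hij hj

lemma attachPaths_connected (hG : G.Connected) : (attachPaths G w p q).Connected := by
  refine (connected_iff_exists_forall_reachable _).2 ⟨.inl w, ?_⟩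
  rintro (x | t | t)
  · exact (hG.preconnected w x).map (attachPathsBase G w p q)
  · obtain ⟨P, -⟩ := exists_walk_leftArm (G := G) (w := w) (q := q) (Nat.zero_le (t + 1)) t.isLt
    simpa using P.reachable
  · obtain ⟨P, -⟩ := exists_walk_rightArm (G := G) (w := w) (p := p) (Nat.zero_le (t + 1)) t.isLt
    simpa using P.reachable

@[simp] lemma attachPathsDist_self (a : V ⊕ (Fin p ⊕ Fin q)) : attachPathsDist G w p q a a = 0 := by
  rcases a with x | t | t <;> simp [attachPathsDist]

lemma attachPathsDist_le_of_adj {a b : V ⊕ (Fin p ⊕ Fin q)} (h : (attachPaths G w p q).Adj a b)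
    (c : V ⊕ (Fin p ⊕ Fin q)) :
    attachPathsDist G w p q a c ≤ attachPathsDist G w p q b c + 1 := by
  rcases a with x | s | s <;> rcases b with y | t | t <;>
    simp only [attachPaths, fromRel_adj, ne_eq, Sum.inl.injEq, Sum.inr.injEq, reduceCtorEq,
      not_false_eq_true, or_false, false_or, true_and, or_self, and_false] at h
  · have hxy : G.Adj x y := h.2.elim id .symm
    rcases c with z | r | r <;> simp only [attachPathsDist]
    · exact hxy.dist_le_dist_add_one z
    all_goals linarith [hxy.dist_le_dist_add_one w]
  all_goals
    try obtain ⟨rfl, h⟩ := h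
    rcases c with z | r | r <;>
      simp only [attachPathsDist, SimpleGraph.dist_self, SimpleGraph.dist_comm] <;> omega

lemma dist_attachPaths_le (hG : G.Connected) (a b : V ⊕ (Fin p ⊕ Fin q)) :
    (attachPaths G w p q).dist a b ≤ attachPathsDist G w p q a b := by
  set H := attachPaths G w p q
  have tri (a b c) : H.dist a c ≤ H.dist a b + H.dist b c :=
    (attachPaths_connected hG).dist_triangle
  have base (x y : V) : H.dist (.inl x) (.inl y) ≤ G.dist x y := by
    obtain ⟨P, hP⟩ := hG.exists_walk_length_eq_dist x y
    have := dist_le (P.map (attachPathsBase G w p q))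
    rwa [Walk.length_map, hP] at this
  have left (s t : Fin p) (hst : s ≤ t) : H.dist (.inr (.inl s)) (.inr (.inl t)) ≤ t - s := by
    obtain ⟨P, hP⟩ :=
      exists_walk_leftArm (G := G) (w := w) (q := q) (Nat.succ_le_succ hst) t.isLt
    simpa using (dist_le P).trans_eq hP
  have right (s t : Fin q) (hst : s ≤ t) : H.dist (.inr (.inr s)) (.inr (.inr t)) ≤ t - s := by
    obtain ⟨P, hP⟩ :=
      exists_walk_rightArm (G := G) (w := w) (p := p) (Nat.succ_le_succ hst) t.isLt
    simpa using (dist_le P).trans_eq hP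
  have leftTop (t : Fin p) : H.dist (.inl w) (.inr (.inl t)) ≤ t + 1 := by
    obtain ⟨P, hP⟩ :=
      exists_walk_leftArm (G := G) (w := w) (q := q) (Nat.zero_le (t + 1)) t.isLt
    simpa using (dist_le P).trans_eq hP
  have rightTop (t : Fin q) : H.dist (.inl w) (.inr (.inr t)) ≤ t + 1 := by
    obtain ⟨P, hP⟩ :=
      exists_walk_rightArm (G := G) (w := w) (p := p) (Nat.zero_le (t + 1)) t.isLt
    simpa using (dist_le P).trans_eq hP
  rcases a with x | s | s <;> rcases b with y | t | t <;> simp only [attachPathsDist]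
  · exact base x y
  · linarith [tri (.inl x) (.inl w) (.inr (.inl t)), base x w, leftTop t]
  · linarith [tri (.inl x) (.inl w) (.inr (.inr t)), base x w, rightTop t]
  · rw [H.dist_comm]
    linarith [tri (.inl y) (.inl w) (.inr (.inl s)), base y w, leftTop s]
  · rcases le_total s t with hst | hts
    · have := left s t hst; omega
    · have := left t s hts; rw [H.dist_comm]; omega
  · linarith [tri (.inr (.inl s)) (.inl w) (.inr (.inr t)), leftTop s, rightTop t,
      H.dist_comm (u := .inl w) (v := .inr (.inl s))]
  · rw [H.dist_comm]
    linarith [tri (.inl y) (.inl w) (.inr (.inr s)), base y w, rightTop s]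
  · linarith [tri (.inr (.inr s)) (.inl w) (.inr (.inl t)), leftTop t, rightTop s,
      H.dist_comm (u := .inl w) (v := .inr (.inr s))]
  · rcases le_total s t with hst | hts
    · have := right s t hst; omega
    · have := right t s hts; rw [H.dist_comm]; omega

theorem dist_attachPaths (hG : G.Connected) (a b : V ⊕ (Fin p ⊕ Fin q)) :
    (attachPaths G w p q).dist a b = attachPathsDist G w p q a b := by
  refine (dist_attachPaths_le hG a b).antisymm ?_
  obtain ⟨P, hP⟩ := (attachPaths_connected hG).exists_walk_length_eq_dist a b
  rw [← hP]
  simpa using P.apply_le_apply_add_length (φ := (attachPathsDist G w p q · b))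
    (fun _ _ h => attachPathsDist_le_of_adj h b)

lemma dist_leftArm_leftArm (hG : G.Connected) {i j : ℕ} (hi : i ≤ p) (hj : j ≤ p) :
    (attachPaths G w p q).dist (leftArm w p q i) (leftArm w p q j) = max (i - j) (j - i) := by
  rcases i with _ | i <;> rcases j with _ | j <;>
    simp (disch := omega) [leftArm_succ_of_lt, dist_attachPaths hG, attachPathsDist]

lemma dist_rightArm_rightArm (hG : G.Connected) {i j : ℕ} (hi : i ≤ q) (hj : j ≤ q) :
    (attachPaths G w p q).dist (rightArm w p q i) (rightArm w p q j) = max (i - j) (j - i) := by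
  rcases i with _ | i <;> rcases j with _ | j <;>
    simp (disch := omega) [rightArm_succ_of_lt, dist_attachPaths hG, attachPathsDist]

lemma dist_leftArm_rightArm (hG : G.Connected) {i j : ℕ} (hi : i ≤ p) (hj : j ≤ q) :
    (attachPaths G w p q).dist (leftArm w p q i) (rightArm w p q j) = i + j := by
  rcases i with _ | i <;> rcases j with _ | j <;>
    simp (disch := omega) only [leftArm_zero, rightArm_zero, leftArm_succ_of_lt,
      rightArm_succ_of_lt, dist_attachPaths hG, attachPathsDist, SimpleGraph.dist_self] <;>
    omega

lemma dist_leftArm_inl (hG : G.Connected) {i : ℕ} (hi : i ≤ p) (x : V) :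
    (attachPaths G w p q).dist (leftArm w p q i) (.inl x) = G.dist x w + i := by
  rcases i with _ | i <;>
    simp (disch := omega) only [leftArm_zero, leftArm_succ_of_lt, dist_attachPaths hG,
      attachPathsDist, SimpleGraph.dist_comm] <;>
    omega

lemma dist_rightArm_inl (hG : G.Connected) {i : ℕ} (hi : i ≤ q) (x : V) :
    (attachPaths G w p q).dist (rightArm w p q i) (.inl x) = G.dist x w + i := by
  rcases i with _ | i <;>
    simp (disch := omega) only [rightArm_zero, rightArm_succ_of_lt, dist_attachPaths hG,
      attachPathsDist, SimpleGraph.dist_comm] <;>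
    omega

end AttachPaths

section ArmProfiles

variable {V : Type*} [Fintype V] {G : SimpleGraph V} {w : V} {p q : ℕ}
  {X : V ⊕ (Fin p ⊕ Fin q) → ℝ} {ρ : ℝ}

theorem isPendantProfile_leftArm (hG : G.Connected)
    (hX : (distMatrix (attachPaths G w p q)).mulVec X = ρ • X) :
    IsPendantProfile ρ (∑ z, X z) p (fun d => X (leftArm w p q d)) := by
  classical
  intro n hn
  rw [← sum_image (leftArm_injOn.mono fun d hd => by simp_all)]
  refine mul_sub_eq_of_dist hX _ ?_ ?_
  · simp only [mem_image, mem_Ioc]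
    rintro _ ⟨d, ⟨hnd, hdp⟩, rfl⟩
    rw [dist_leftArm_leftArm hG hn.le hdp, dist_leftArm_leftArm hG hn hdp]
    omega
  · rintro (x | t | t) hz
    · rw [dist_leftArm_inl hG hn, dist_leftArm_inl hG hn.le]
      omega
    · have ht : ¬ n < t + 1 := fun h => hz (mem_image.2 ⟨t + 1, mem_Ioc.2 ⟨h, t.isLt⟩, by simp⟩)
      rw [← leftArm_succ, dist_leftArm_leftArm hG hn t.isLt, dist_leftArm_leftArm hG hn.le t.isLt]
      omega
    · rw [← rightArm_succ, dist_leftArm_rightArm hG hn t.isLt,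
        dist_leftArm_rightArm hG hn.le t.isLt]
      omega

theorem isPendantProfile_rightArm (hG : G.Connected)
    (hX : (distMatrix (attachPaths G w p q)).mulVec X = ρ • X) :
    IsPendantProfile ρ (∑ z, X z) q (fun d => X (rightArm w p q d)) := by
  classical
  intro n hn
  rw [← sum_image (rightArm_injOn.mono fun d hd => by simp_all)]
  refine mul_sub_eq_of_dist hX _ ?_ ?_
  · simp only [mem_image, mem_Ioc]
    rintro _ ⟨d, ⟨hnd, hdq⟩, rfl⟩
    rw [dist_rightArm_rightArm hG hn.le hdq, dist_rightArm_rightArm hG hn hdq]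
    omega
  · rintro (x | t | t) hz
    · rw [dist_rightArm_inl hG hn, dist_rightArm_inl hG hn.le]
      omega
    · rw [← leftArm_succ, SimpleGraph.dist_comm, dist_leftArm_rightArm hG t.isLt hn,
        SimpleGraph.dist_comm, dist_leftArm_rightArm hG t.isLt hn.le]
      omega
    · have ht : ¬ n < t + 1 := fun h => hz (mem_image.2 ⟨t + 1, mem_Ioc.2 ⟨h, t.isLt⟩, by simp⟩)
      rw [← rightArm_succ, dist_rightArm_rightArm hG hn t.isLt,
        dist_rightArm_rightArm hG hn.le t.isLt]
      omega

lemma sum_arms_lt_sum [Nontrivial V] (hXpos : ∀ v, 0 < X v) :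
    X (.inl w) + ∑ d ∈ Ioc 0 p, X (leftArm w p q d) + ∑ d ∈ Ioc 0 q, X (rightArm w p q d)
      < ∑ z, X z := by
  obtain ⟨x, hx⟩ := exists_ne w
  rw [← sum_range_succ_eq_sum_Ioc, ← sum_range_succ_eq_sum_Ioc,
    ← Fin.sum_univ_eq_sum_range (fun i => X (leftArm w p q (i + 1))),
    ← Fin.sum_univ_eq_sum_range (fun i => X (rightArm w p q (i + 1))),
    Fintype.sum_sum_type, Fintype.sum_sum_type]
  simp only [leftArm_succ, rightArm_succ]
  have := single_lt_sum (f := fun y => X (.inl y)) hx (mem_univ w) (mem_univ x) (hXpos (.inl x))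
    (fun y _ _ => (hXpos (.inl y)).le)
  linarith

end ArmProfiles

section ArmLabels

variable {V : Type*} {w : V} {k : ℕ}

lemma armV_eq_leftArm {i : ℕ} (h : i < k) : armV w k ⟨i, h⟩ = leftArm w (k - 1) k i := by
  rcases i with _ | i
  · rfl
  · simp [armV, leftArm, (by omega : i < k - 1)]

lemma armU_eq_rightArm (i : Fin k) : armU w k i = rightArm w (k - 1) k (i + 1) := by
  simp [armU]

end ArmLabels

/-- Lemma 2.3 (first part): in the graph obtained by attaching two pendant paths of lengths
`k-1` and `k` to a vertex `w` of a nontrivial connected graph, the distance Perron vector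
satisfies `x_{v_1} < x_{u_1}` and `x_{u_{i-1}} < x_{v_i} < x_{u_i}` for `2 ≤ i ≤ k`
(1-based indices). -/
theorem stmt3 {V : Type*} [Fintype V] (G' : SimpleGraph V) (hV : Nontrivial V)
    (hG : G'.Connected) (w : V) (k : ℕ) (hk : 2 ≤ k)
    (X : (V ⊕ (Fin (k - 1) ⊕ Fin k)) → ℝ)
    (hX : IsDistPerronVector (attachPaths G' w (k - 1) k) X) :
    X (armV w k ⟨0, by omega⟩) < X (armU w k ⟨0, by omega⟩) ∧
    ∀ i : ℕ, ∀ _h2 : 2 ≤ i, ∀ _hik : i ≤ k,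
      X (armU w k ⟨i - 2, by omega⟩) < X (armV w k ⟨i - 1, by omega⟩) ∧
      X (armV w k ⟨i - 1, by omega⟩) < X (armU w k ⟨i - 1, by omega⟩) := by
  obtain ⟨hXpos, -, hXeig⟩ := hX
  have hρ := distMatrix_eigenvalue_pos (attachPaths_connected hG)
    (a := .inl w) (b := .inr (.inr ⟨0, by omega⟩)) (by simp) hXpos hXeig
  have hf := isPendantProfile_leftArm hG hXeig
  have hg := isPendantProfile_rightArm hG hXeig
  have hfg := pendant_short_lt_long_succ hρ hk hf hg rfl (sum_arms_lt_sum hXpos)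
  have hgf := pendant_long_lt_short hρ hk hf hg rfl (hXpos _)
  simp only [armV_eq_leftArm, armU_eq_rightArm]
  refine ⟨hfg 0 (by omega), fun i hi hik => ⟨?_, hfg (i - 1) (by omega)⟩⟩
  rw [show i - 2 + 1 = i - 1 by omega]
  exact hgf (i - 1) (by omega) (by omega)
end

section
/- In the graph of the previous setting (two pendant arms of lengths k−1 and k attached to a nontrivial connected graph), the entries of the distance Perron vector along the longer arm are strictly increasing: x_{u_1} < x_{u_2} < ⋯ < x_{u_k}, and similarly x_{v_1} < x_{v_2} < ⋯ < x_{v_k} along the shorter arm. -/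
open SimpleGraph

/-!
Let `a₀ = x_w, a₁, …, a_k` and `b₀ = x_w, b₁, …, b_{k-1}` be the Perron entries along the longer
and the shorter arm, read outward from `w`, with tail sums `Aᵢ = ∑_{m ≥ i} a_m`, `Bᵢ = ∑_{m ≥ i} b_m` and total weight `S`.
Every arm edge is a cut edge, so stepping outward raises the distance to everything off the tail by
one and lowers it to the tail by one: `ρ (a_{i+1} - a_i) = S - 2 A_{i+1}` and likewise for `b`.

Subtracting, `y_n = a_{n+1} - b_n` and `s_n = A_{n+1} - B_n` satisfy `ρ (y_{n+1} - y_n) = -2 s_{n+1}`,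
`s_n = y_n + s_{n+1}`, `s_k = 0`, and `ρ y₀ + s₀ = S - A₁ - B₀ > 0` (the weight of `G' - w`).
Run backwards from the free end, the recurrence makes every `y_n, s_n` a positive multiple of
`y_{k-1}`, and the condition at `n = 0` forces `y_{k-1} > 0`. Hence
`S - 2 A_{i+1} ≥ S - 2 A₁ = ρ y₀ > 0` and `S - 2 B_{i+1} = S - 2 A_{i+2} + 2 s_{i+1} > 0`.
-/

open SimpleGraph Finset

namespace SimpleGraph

variable {W : Type*} {H : SimpleGraph W} {T : Set W} {a b : W}

theorem Walk.dist_add_one_le_length_of_cut (hexit : ∀ x ∈ T, ∀ y ∉ T, H.Adj x y → y = a)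
    {x z : W} (p : H.Walk x z) (hx : x ∈ T) (hz : z ∉ T) : H.dist a z + 1 ≤ p.length := by
  induction p with
  | nil => exact absurd hx hz
  | @cons x y z hxy p ih =>
    rw [Walk.length_cons]
    by_cases hy : y ∈ T
    · exact (ih hy hz).trans (Nat.le_succ _)
    · obtain rfl := hexit x hx y hy hxy
      exact Nat.succ_le_succ (dist_le p)

theorem Connected.dist_eq_dist_add_one_of_cut (hH : H.Connected) (hb : b ∈ T) (hab : H.Adj a b)
    (hexit : ∀ x ∈ T, ∀ y ∉ T, H.Adj x y → y = a) {z : W} (hz : z ∉ T) :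
    H.dist b z = H.dist a z + 1 := by
  refine le_antisymm ?_ ?_
  · calc H.dist b z ≤ H.dist b a + H.dist a z := hH.dist_triangle
      _ = H.dist a z + 1 := by rw [dist_eq_one_iff_adj.mpr hab.symm, add_comm]
  · obtain ⟨p, hp⟩ := hH.exists_walk_length_eq_dist b z
    exact hp ▸ p.dist_add_one_le_length_of_cut hexit hb hz

end SimpleGraph

section DistanceEigenvector

variable {W : Type*} [Fintype W] {H : SimpleGraph W} {X : W → ℝ} {ρ : ℝ}

theorem eigenvalue_mul_eq_sum_dist (hX : (distMatrix H).mulVec X = ρ • X) (c : W) :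
    ρ * X c = ∑ z, (H.dist c z : ℝ) * X z := by
  simpa [Matrix.mulVec, dotProduct, distMatrix] using (congrFun hX c).symm

theorem pos_of_distMatrix_mulVec [Nontrivial W] (hH : H.Connected) (hXpos : ∀ z, 0 < X z)
    (hX : (distMatrix H).mulVec X = ρ • X) : 0 < ρ := by
  obtain ⟨c, d, hcd⟩ := exists_pair_ne W
  have : 0 < ρ * X c := by
    rw [eigenvalue_mul_eq_sum_dist hX]
    calc 0 < (H.dist c d : ℝ) * X d := mul_pos (by exact_mod_cast hH.pos_dist_of_ne hcd) (hXpos d)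
      _ ≤ ∑ z, (H.dist c z : ℝ) * X z :=
        single_le_sum (fun z _ => mul_nonneg (Nat.cast_nonneg _) (hXpos z).le) (mem_univ d)
  exact pos_of_mul_pos_left this (hXpos c).le

theorem distMatrix_mulVec_sub_of_cut [DecidableEq W] (hH : H.Connected)
    (hX : (distMatrix H).mulVec X = ρ • X) {T : Finset W} {a b : W} (ha : a ∉ T) (hb : b ∈ T)
    (hab : H.Adj a b) (hcut : ∀ x ∈ T, ∀ y ∉ T, H.Adj x y → x = b ∧ y = a) :
    ρ * (X b - X a) = ∑ z, X z - 2 * ∑ z ∈ T, X z := by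
  have on_T : ∀ z ∈ T, ((H.dist b z : ℝ) - H.dist a z) * X z = -X z := fun z hz => by
    have hexit : ∀ x ∈ (T : Set W)ᶜ, ∀ y ∉ (T : Set W)ᶜ, H.Adj x y → y = b :=
      fun x hx y hy hxy => (hcut y (not_not.mp hy) x hx hxy.symm).1
    rw [hH.dist_eq_dist_add_one_of_cut (T := (T : Set W)ᶜ) ha hab.symm hexit (not_not.mpr hz)]
    push_cast; ring
  have off_T : ∀ z ∈ Tᶜ, ((H.dist b z : ℝ) - H.dist a z) * X z = X z := fun z hz => by
    rw [hH.dist_eq_dist_add_one_of_cut (T := T) hb hab (fun x hx y hy hxy => (hcut x hx y hy hxy).2)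
      (by simpa using hz)]
    push_cast; ring
  calc ρ * (X b - X a) = ∑ z, ((H.dist b z : ℝ) - H.dist a z) * X z := by
        simp only [mul_sub, eigenvalue_mul_eq_sum_dist hX, sub_mul, sum_sub_distrib]
    _ = -∑ z ∈ T, X z + ∑ z ∈ Tᶜ, X z := by
        rw [← sum_add_sum_compl T, sum_congr rfl on_T, sum_congr rfl off_T, sum_neg_distrib]
    _ = ∑ z, X z - 2 * ∑ z ∈ T, X z := by
        rw [← sum_add_sum_compl T]; ring

end DistanceEigenvector

namespace attachPaths

variable {V : Type*} {G : SimpleGraph V} {w : V} {p q : ℕ}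

def fstArm (w : V) (p q : ℕ) : ℕ → V ⊕ (Fin p ⊕ Fin q)
  | 0 => Sum.inl w
  | n + 1 => if h : n < p then Sum.inr (Sum.inl ⟨n, h⟩) else Sum.inl w

def sndArm (w : V) (p q : ℕ) : ℕ → V ⊕ (Fin p ⊕ Fin q)
  | 0 => Sum.inl w
  | n + 1 => if h : n < q then Sum.inr (Sum.inr ⟨n, h⟩) else Sum.inl w

theorem adj_fstArm {n : ℕ} (hn : n < p) :
    (attachPaths G w p q).Adj (fstArm w p q n) (fstArm w p q (n + 1)) := by
  cases n with
  | zero => simp [fstArm, attachPaths, hn]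
  | succ n => simp [fstArm, attachPaths, hn, show n < p by omega]

theorem adj_sndArm {n : ℕ} (hn : n < q) :
    (attachPaths G w p q).Adj (sndArm w p q n) (sndArm w p q (n + 1)) := by
  cases n with
  | zero => simp [sndArm, attachPaths, hn]
  | succ n => simp [sndArm, attachPaths, hn, show n < q by omega]

theorem fstArm_injOn : Set.InjOn (fstArm w p q) (Set.Iic p) := by
  rintro (_ | m) hm (_ | n) hn h <;> simp_all [fstArm]

theorem sndArm_injOn : Set.InjOn (sndArm w p q) (Set.Iic q) := by
  rintro (_ | m) hm (_ | n) hn h <;> simp_all [sndArm]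

theorem connected (hG : G.Connected) : (attachPaths G w p q).Connected := by
  have reach_fst : ∀ n ≤ p, (attachPaths G w p q).Reachable (Sum.inl w) (fstArm w p q n) := by
    intro n hn
    induction n with
    | zero => rfl
    | succ n ih => exact (ih (by omega)).trans (adj_fstArm hn).reachable
  have reach_snd : ∀ n ≤ q, (attachPaths G w p q).Reachable (Sum.inl w) (sndArm w p q n) := by
    intro n hn
    induction n with
    | zero => rfl
    | succ n ih => exact (ih (by omega)).trans (adj_sndArm hn).reachable
  let incl : G →g attachPaths G w p q := ⟨Sum.inl, fun h => by simp [attachPaths, h, h.ne]⟩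
  rw [connected_iff_exists_forall_reachable]
  refine ⟨Sum.inl w, ?_⟩
  rintro (x | j | j)
  · exact (hG w x).map incl
  · simpa [fstArm] using reach_fst (j + 1) j.isLt
  · simpa [sndArm] using reach_snd (j + 1) j.isLt

variable [DecidableEq V]

theorem fstArm_tail_cut {i : ℕ} (hi : i < p) :
    ∀ x ∈ (Ico (i + 1) (p + 1)).image (fstArm w p q),
    ∀ y ∉ (Ico (i + 1) (p + 1)).image (fstArm w p q),
    (attachPaths G w p q).Adj x y → x = fstArm w p q (i + 1) ∧ y = fstArm w p q i := by
  rintro _ hx y hy hxy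
  obtain ⟨_ | n, hn, rfl⟩ := mem_image.mp hx
  · simp at hn
  simp only [mem_Ico] at hn
  rcases y with y | j | j <;> simp [fstArm, attachPaths, show n < p by omega] at hxy
  · obtain ⟨rfl, rfl⟩ := hxy
    obtain rfl : i = 0 := by omega
    simp [fstArm, hi]
  · have hj : (j : ℕ) < i := by
      by_contra! h
      exact hy (mem_image.mpr ⟨j + 1, by simp; omega, by simp [fstArm]⟩)
    obtain rfl : n = j + 1 := by omega
    obtain rfl : i = j + 1 := by omega
    simp [fstArm, hi]

theorem sndArm_tail_cut {i : ℕ} (hi : i < q) :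
    ∀ x ∈ (Ico (i + 1) (q + 1)).image (sndArm w p q),
    ∀ y ∉ (Ico (i + 1) (q + 1)).image (sndArm w p q),
    (attachPaths G w p q).Adj x y → x = sndArm w p q (i + 1) ∧ y = sndArm w p q i := by
  rintro _ hx y hy hxy
  obtain ⟨_ | n, hn, rfl⟩ := mem_image.mp hx
  · simp at hn
  simp only [mem_Ico] at hn
  rcases y with y | j | j <;> simp [sndArm, attachPaths, show n < q by omega] at hxy
  · obtain ⟨rfl, rfl⟩ := hxy
    obtain rfl : i = 0 := by omega
    simp [sndArm, hi]
  · have hj : (j : ℕ) < i := by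
      by_contra! h
      exact hy (mem_image.mpr ⟨j + 1, by simp; omega, by simp [sndArm]⟩)
    obtain rfl : n = j + 1 := by omega
    obtain rfl : i = j + 1 := by omega
    simp [sndArm, hi]

variable [Fintype V] {X : V ⊕ (Fin p ⊕ Fin q) → ℝ} {ρ : ℝ}

theorem mulVec_fstArm_step (hG : G.Connected)
    (hX : (distMatrix (attachPaths G w p q)).mulVec X = ρ • X) {i : ℕ} (hi : i < p) :
    ρ * (X (fstArm w p q (i + 1)) - X (fstArm w p q i)) =
      ∑ z, X z - 2 * ∑ m ∈ Ico (i + 1) (p + 1), X (fstArm w p q m) := by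
  have hinj : Set.InjOn (fstArm w p q) ↑(Ico i (p + 1)) :=
    fstArm_injOn.mono fun m hm => by simp at hm ⊢; omega
  rw [← sum_image (hinj.mono (by simp [Set.subset_def]; omega))]
  refine distMatrix_mulVec_sub_of_cut (connected hG) hX ?_
    (mem_image_of_mem _ (by simp; omega)) (adj_fstArm hi) (fstArm_tail_cut hi)
  intro hmem
  obtain ⟨m, hm, h⟩ := mem_image.mp hmem
  have := hinj (by simp at hm ⊢; omega) (by simp; omega) h
  simp at hm; omega

theorem mulVec_sndArm_step (hG : G.Connected)
    (hX : (distMatrix (attachPaths G w p q)).mulVec X = ρ • X) {i : ℕ} (hi : i < q) :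
    ρ * (X (sndArm w p q (i + 1)) - X (sndArm w p q i)) =
      ∑ z, X z - 2 * ∑ m ∈ Ico (i + 1) (q + 1), X (sndArm w p q m) := by
  have hinj : Set.InjOn (sndArm w p q) ↑(Ico i (q + 1)) :=
    sndArm_injOn.mono fun m hm => by simp at hm ⊢; omega
  rw [← sum_image (hinj.mono (by simp [Set.subset_def]; omega))]
  refine distMatrix_mulVec_sub_of_cut (connected hG) hX ?_
    (mem_image_of_mem _ (by simp; omega)) (adj_sndArm hi) (sndArm_tail_cut hi)
  intro hmem
  obtain ⟨m, hm, h⟩ := mem_image.mp hmem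
  have := hinj (by simp at hm ⊢; omega) (by simp; omega) h
  simp at hm; omega

theorem sum_fstArm_add_sum_sndArm_lt [Nontrivial V] (hXpos : ∀ z, 0 < X z) :
    ∑ m ∈ range (p + 1), X (fstArm w p q m) + ∑ m ∈ Ico 1 (q + 1), X (sndArm w p q m) <
      ∑ z, X z := by
  obtain ⟨y, hy⟩ := exists_ne w
  have disj : Disjoint ((range (p + 1)).image (fstArm w p q))
      ((Ico 1 (q + 1)).image (sndArm w p q)) := by
    simp only [Finset.disjoint_left, mem_image, mem_range, mem_Ico, not_exists, not_and]
    rintro _ ⟨m, hm, rfl⟩ (_ | n) hn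
    · omega
    · cases m <;> simp [fstArm, sndArm, show n < q by omega]; split_ifs <;> simp
  rw [← sum_image (fstArm_injOn.mono (by simp [Set.subset_def])),
    ← sum_image (sndArm_injOn.mono (by simp [Set.subset_def])), ← sum_union disj]
  refine sum_lt_sum_of_subset (subset_univ _) (mem_univ (Sum.inl y)) ?_ (hXpos _)
    fun z _ _ => (hXpos z).le
  simp only [mem_union, mem_image, not_or, not_exists, not_and]
  constructor
  · rintro (_ | m) - <;> simp [fstArm, hy.symm, dite_eq_iff]
  · rintro (_ | m) - <;> simp [sndArm, hy.symm, dite_eq_iff]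

end attachPaths

section ArmSequences

variable {k : ℕ} {ρ : ℝ}

theorem pos_of_backward_recurrence {y s : ℕ → ℝ} (hρ : 0 < ρ)
    (hs : ∀ n < k, s n = y n + s (n + 1)) (hsk : s k = 0)
    (hy : ∀ n, n + 1 < k → ρ * (y (n + 1) - y n) = -2 * s (n + 1))
    (h0 : 0 < ρ * y 0 + s 0) {n : ℕ} (hn : n < k) : 0 < y n ∧ 0 < s n := by
  set c := y (k - 1)
  have multiple : ∀ m ≤ k - 1, ∃ α β : ℝ, 0 < α ∧ 0 < β ∧ y m = α * c ∧ s m = β * c := by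
    intro m hm
    induction hm using Nat.decreasingInduction with
    | self => exact ⟨1, 1, one_pos, one_pos, (one_mul c).symm, by
        rw [hs _ (by omega), Nat.sub_add_cancel (by omega), hsk]; ring⟩
    | of_succ j hj ih =>
      obtain ⟨α, β, hα, hβ, hyj, hsj⟩ := ih
      have hyj' : y j = (α + 2 * β / ρ) * c := by
        have h := hy j (by omega)
        rw [hyj, hsj] at h
        field_simp
        linarith
      refine ⟨α + 2 * β / ρ, α + 2 * β / ρ + β, by positivity, by positivity, hyj', ?_⟩
      rw [hs j (by omega), hyj', hsj]; ring
  obtain ⟨α, β, hα, hβ, hy0, hs0⟩ := multiple 0 (Nat.zero_le _)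
  have hc : 0 < c := by
    rw [hy0, hs0] at h0
    exact pos_of_mul_pos_right (a := ρ * α + β) (by linarith) (by positivity)
  obtain ⟨α', β', hα', hβ', hyn, hsn⟩ := multiple n (by omega)
  exact ⟨hyn ▸ by positivity, hsn ▸ by positivity⟩

theorem strictMonoOn_of_arm_relations {a b : ℕ → ℝ} {S : ℝ} (hρ : 0 < ρ) (ha : ∀ m, 0 ≤ a m)
    (hab : a 0 = b 0) (hS : ∑ m ∈ range k, b m + ∑ m ∈ Ico 1 (k + 1), a m < S)
    (hA : ∀ i < k, ρ * (a (i + 1) - a i) = S - 2 * ∑ m ∈ Ico (i + 1) (k + 1), a m)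
    (hB : ∀ i, i + 1 < k → ρ * (b (i + 1) - b i) = S - 2 * ∑ m ∈ Ico (i + 1) k, b m) :
    StrictMonoOn a (Set.Iic k) ∧ StrictMonoOn b (Set.Iio k) := by
  set A := fun i => ∑ m ∈ Ico i (k + 1), a m
  set B := fun i => ∑ m ∈ Ico i k, b m
  have gap : ∀ n < k, 0 < a (n + 1) - b n ∧ 0 < A (n + 1) - B n := by
    refine fun n hn => pos_of_backward_recurrence (y := fun n => a (n + 1) - b n)
      (s := fun n => A (n + 1) - B n) hρ ?_ ?_ ?_ ?_ hn
    · intro n hn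
      simp only [A, B, sum_eq_sum_Ico_succ_bot (by omega : n + 1 < k + 1),
        sum_eq_sum_Ico_succ_bot hn]
      ring
    · simp [A, B]
    · intro n hn
      simp only [A, B]
      linear_combination hA (n + 1) hn - hB n hn
    · simp only [A, B, ← range_eq_Ico, ← hab]
      linarith [hA 0 (by omega)]
  have a_step : ∀ i < k, a i < a (i + 1) := by
    intro i hi
    have h_first : 0 < ρ * (a 1 - a 0) := mul_pos hρ (by simpa [hab] using (gap 0 (by omega)).1)
    have htail : A (i + 1) ≤ A 1 :=
      sum_le_sum_of_subset_of_nonneg (Ico_subset_Ico_left (by omega)) fun m _ _ => ha m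
    have : 0 < ρ * (a (i + 1) - a i) := by linarith [hA i hi, hA 0 (by omega)]
    exact sub_pos.mp (pos_of_mul_pos_right this hρ.le)
  have b_step : ∀ i, i + 1 < k → b i < b (i + 1) := by
    intro i hi
    have h_tail := (gap (i + 1) hi).2
    have h_next := mul_pos hρ (sub_pos.mpr (a_step (i + 1) hi))
    have : 0 < ρ * (b (i + 1) - b i) := by linarith [hB i hi, hA (i + 1) hi]
    exact sub_pos.mp (pos_of_mul_pos_right this hρ.le)
  exact ⟨strictMonoOn_of_lt_add_one Set.ordConnected_Iic fun i _ _ hi => a_step i hi,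
    strictMonoOn_of_lt_add_one Set.ordConnected_Iio fun i _ _ hi => b_step i hi⟩

end ArmSequences

theorem stmt4_general {V : Type*} [Fintype V] (G' : SimpleGraph V) (hV : Nontrivial V)
    (hG : G'.Connected) (w : V) (k : ℕ)
    (X : (V ⊕ (Fin (k - 1) ⊕ Fin k)) → ℝ)
    (hX : IsDistPerronVector (attachPaths G' w (k - 1) k) X) :
    ∀ i j : Fin k, i < j →
      X (armU w k i) < X (armU w k j) ∧ X (armV w k i) < X (armV w k j) := by
  classical
  obtain ⟨hpos, -, heig⟩ := hX
  intro i j hij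
  have hk : k - 1 + 1 = k := Nat.sub_add_cancel i.pos
  have : Nontrivial (V ⊕ (Fin (k - 1) ⊕ Fin k)) := Sum.inl_injective.nontrivial
  obtain ⟨hsnd, hfst⟩ := strictMonoOn_of_arm_relations
    (pos_of_distMatrix_mulVec (attachPaths.connected hG) hpos heig)
    (a := fun m => X (attachPaths.sndArm w (k - 1) k m))
    (b := fun m => X (attachPaths.fstArm w (k - 1) k m)) (fun m => (hpos _).le) rfl
    (by simpa [hk] using attachPaths.sum_fstArm_add_sum_sndArm_lt hpos)
    (fun i hi => attachPaths.mulVec_sndArm_step hG heig hi)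
    (fun i hi => by simpa [hk] using attachPaths.mulVec_fstArm_step hG heig (by omega : i < k - 1))
  have armU_eq (i : Fin k) : armU w k i = attachPaths.sndArm w (k - 1) k (i + 1) := by
    simp [armU, attachPaths.sndArm]
  have armV_eq (i : Fin k) : armV w k i = attachPaths.fstArm w (k - 1) k i := by
    obtain ⟨_ | n, hn⟩ := i
    · simp [armV, attachPaths.fstArm]
    · simp [armV, attachPaths.fstArm, show n < k - 1 by omega]
  rw [armU_eq, armU_eq, armV_eq, armV_eq]
  exact ⟨hsnd (by simp) (by simp) (by simpa using hij), hfst (by simp) (by simp) hij⟩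

/-- Lemma 2.3 (second part): the entries of the distance Perron vector are strictly
increasing along each of the two pendant arms: `x_{u_1} < x_{u_2} < ⋯ < x_{u_k}` and
`x_{v_1} < x_{v_2} < ⋯ < x_{v_k}`. -/
theorem stmt4 {V : Type*} [Fintype V] (G' : SimpleGraph V) (hV : Nontrivial V)
    (hG : G'.Connected) (w : V) (k : ℕ) (hk : 2 ≤ k)
    (X : (V ⊕ (Fin (k - 1) ⊕ Fin k)) → ℝ)
    (hX : IsDistPerronVector (attachPaths G' w (k - 1) k) X) :
    ∀ i j : Fin k, i < j →
      X (armU w k i) < X (armU w k j) ∧ X (armV w k i) < X (armV w k j) :=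
  stmt4_general G' hV hG w k X hX
end
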